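/- arXiv:1802.03347 — 4 statements merged into one kernel-verified Lean document; each statement's English description precedes it below -/
import Mathlib

section
/- Let X, Y be real Hilbert spaces, A ∈ L(X;Y), and φ, ψ, η > 0 with δ, κ satisfying 0 ≤ δ ≤ κ < 1 and ψ(1−κ) ≥ η²φ⁻¹‖A‖². Then for all (x,y) ∈ X × Y, φ‖x‖² − 2η⟨Ax,y⟩ + ψ‖y‖² ≥ δφ‖x‖² + ((κ−δ)/(1−δ))ψ‖y‖². -/
open scoped RealInnerProductSpace

/-!
Absorb a fraction `δ` of `φ‖x‖²` and the share `(κ - δ)/(1 - δ)` of `ψ‖y‖²` into the right-hand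
side. What is left, `(1 - δ)φ‖x‖² - 2η⟪A x, y⟫ + ((1 - κ)/(1 - δ))ψ‖y‖²`, is nonnegative by Young's
inequality `2η⟪A x, y⟫ ≤ a‖x‖² + c‖y‖²`, valid as soon as `η²‖A‖² ≤ a c`; for these coefficients
`a c = (1 - κ)φψ`, so this is exactly the step-length condition.
-/

lemma two_mul_mul_mul_le_of_sq_le_mul {a b c : ℝ} (ha : 0 < a) (h : b ^ 2 ≤ a * c) (t s : ℝ) :
    2 * b * t * s ≤ a * t ^ 2 + c * s ^ 2 := by
  have hdecomp : a * (a * t ^ 2 + c * s ^ 2 - 2 * b * t * s) =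
      (a * t - b * s) ^ 2 + (a * c - b ^ 2) * s ^ 2 := by ring
  have : 0 ≤ a * (a * t ^ 2 + c * s ^ 2 - 2 * b * t * s) := by
    rw [hdecomp]
    exact add_nonneg (sq_nonneg _) (mul_nonneg (sub_nonneg.2 h) (sq_nonneg _))
  linarith [(mul_nonneg_iff_of_pos_left ha).1 this]

namespace ContinuousLinearMap

variable {X Y : Type*} [NormedAddCommGroup X] [InnerProductSpace ℝ X]
  [NormedAddCommGroup Y] [InnerProductSpace ℝ Y]

lemma abs_inner_apply_le (A : X →L[ℝ] Y) (x : X) (y : Y) :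
    |⟪A x, y⟫| ≤ ‖A‖ * ‖x‖ * ‖y‖ :=
  (abs_real_inner_le_norm _ _).trans
    (mul_le_mul_of_nonneg_right (A.le_opNorm x) (norm_nonneg y))

lemma two_mul_inner_apply_le (A : X →L[ℝ] Y) {η a c : ℝ} (ha : 0 < a)
    (h : η ^ 2 * ‖A‖ ^ 2 ≤ a * c) (x : X) (y : Y) :
    2 * η * ⟪A x, y⟫ ≤ a * ‖x‖ ^ 2 + c * ‖y‖ ^ 2 := by
  have hb : (|η| * ‖A‖) ^ 2 ≤ a * c := by rwa [mul_pow, sq_abs]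
  calc 2 * η * ⟪A x, y⟫ ≤ 2 * |η * ⟪A x, y⟫| := by
        rw [mul_assoc]; exact mul_le_mul_of_nonneg_left (le_abs_self _) zero_le_two
    _ ≤ 2 * (|η| * (‖A‖ * ‖x‖ * ‖y‖)) := by
        rw [abs_mul]
        gcongr
        exact A.abs_inner_apply_le x y
    _ = 2 * (|η| * ‖A‖) * ‖x‖ * ‖y‖ := by ring
    _ ≤ a * ‖x‖ ^ 2 + c * ‖y‖ ^ 2 := two_mul_mul_mul_le_of_sq_le_mul ha hb _ _

end ContinuousLinearMap

theorem block_metric_two_sided_bound_general {X Y : Type*}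
    [NormedAddCommGroup X] [InnerProductSpace ℝ X]
    [NormedAddCommGroup Y] [InnerProductSpace ℝ Y]
    (A : X →L[ℝ] Y) (φ ψ η δ κ : ℝ) (hφ : 0 < φ)
    (hδκ : δ ≤ κ) (hκ1 : κ < 1)
    (hstep : ψ * (1 - κ) ≥ η ^ 2 * φ⁻¹ * ‖A‖ ^ 2) :
    ∀ (x : X) (y : Y),
      φ * ‖x‖ ^ 2 - 2 * η * ⟪A x, y⟫ + ψ * ‖y‖ ^ 2 ≥
        δ * φ * ‖x‖ ^ 2 + ((κ - δ) / (1 - δ)) * ψ * ‖y‖ ^ 2 := by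
  intro x y
  have hδ1 : 0 < 1 - δ := by linarith
  have hshare : (κ - δ) / (1 - δ) = 1 - (1 - κ) / (1 - δ) := by field_simp; ring
  have hprod : η ^ 2 * ‖A‖ ^ 2 ≤ ((1 - δ) * φ) * ((1 - κ) / (1 - δ) * ψ) := by
    calc η ^ 2 * ‖A‖ ^ 2 = η ^ 2 * φ⁻¹ * ‖A‖ ^ 2 * φ := by field_simp
      _ ≤ ψ * (1 - κ) * φ := mul_le_mul_of_nonneg_right hstep hφ.le
      _ = ((1 - δ) * φ) * ((1 - κ) / (1 - δ) * ψ) := by field_simp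
  have hyoung := A.two_mul_inner_apply_le (mul_pos hδ1 hφ) hprod x y
  rw [hshare]
  linarith

/-- Two-sided lower bound on the quadratic form of the preconditioning metric
(scalar case of Lemma 3.2). -/
theorem block_metric_two_sided_bound {X Y : Type*}
    [NormedAddCommGroup X] [InnerProductSpace ℝ X]
    [NormedAddCommGroup Y] [InnerProductSpace ℝ Y]
    (A : X →L[ℝ] Y) (φ ψ η δ κ : ℝ) (hφ : 0 < φ) (hψ : 0 < ψ) (hη : 0 < η)
    (hδ0 : 0 ≤ δ) (hδκ : δ ≤ κ) (hκ1 : κ < 1)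
    (hstep : ψ * (1 - κ) ≥ η ^ 2 * φ⁻¹ * ‖A‖ ^ 2) :
    ∀ (x : X) (y : Y),
      φ * ‖x‖ ^ 2 - 2 * η * ⟪A x, y⟫ + ψ * ‖y‖ ^ 2 ≥
        δ * φ * ‖x‖ ^ 2 + ((κ - δ) / (1 - δ)) * ψ * ‖y‖ ^ 2 :=
  block_metric_two_sided_bound_general A φ ψ η δ κ hφ hδκ hκ1 hstep
end

section
/- Let (τᵢ) be a sequence of positive reals with τ_{i+1} = τᵢ/√(1 + 2γτᵢ) for a fixed γ > 0. Then τ_N = O(1/N); more precisely, there exists c > 0 such that τ_N ≤ c/N for all N ≥ 1, and consequently φ_N := c₀/τ_N² (for any c₀ > 0) satisfies φ_N ≥ c′N² for some c′ > 0. -/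
/-!
In terms of `uᵢ = 1/τᵢ` the recursion reads `u_{i+1} = √(uᵢ² + 2γuᵢ)`. Completing the square,
`u + δ ≤ √(u² + 2γu)` as soon as `δ ≤ γ/2` and `δ ≤ u₀ ≤ u`, so `uᵢ` increases by at least
`δ = min (γ/2) u₀` per step and `u_N ≥ δN`. Both claims follow with `c = 1/δ` and `c' = c₀δ²`.
-/

lemma inv_div_sqrt_one_add_mul {t : ℝ} (ht : 0 ≤ t) (γ : ℝ) :
    (t / √(1 + 2 * γ * t))⁻¹ = √(t⁻¹ ^ 2 + 2 * γ * t⁻¹) := by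
  rcases ht.eq_or_lt with rfl | ht
  · simp
  have : t⁻¹ ^ 2 + 2 * γ * t⁻¹ = t⁻¹ ^ 2 * (1 + 2 * γ * t) := by field_simp
  rw [inv_div, this, Real.sqrt_mul (by positivity), Real.sqrt_sq (by positivity), div_eq_inv_mul]

lemma add_min_le_sqrt_sq_add {γ u₀ u : ℝ} (hγ : 0 ≤ γ) (hu₀ : 0 ≤ u₀) (hu : u₀ ≤ u) :
    u + min (γ / 2) u₀ ≤ √(u ^ 2 + 2 * γ * u) := by
  set δ := min (γ / 2) u₀
  have hδγ : δ ≤ γ / 2 := min_le_left _ _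
  have hδu₀ : δ ≤ u₀ := min_le_right _ _
  have hδ : 0 ≤ δ := le_min (by positivity) hu₀
  rw [Real.le_sqrt (by linarith) (by nlinarith)]
  nlinarith [mul_le_mul hδγ hδu₀ hδ (by positivity)]

lemma add_mul_le_of_add_le_succ {u : ℕ → ℝ} {δ : ℝ} (hδ : 0 ≤ δ)
    (hstep : ∀ n, u 0 ≤ u n → u n + δ ≤ u (n + 1)) (n : ℕ) : u 0 + n * δ ≤ u n := by
  induction n with
  | zero => simp
  | succ n ih =>
    have := hstep n (by nlinarith [n.cast_nonneg (α := ℝ)])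
    push_cast
    linarith

/-- Step-length decay rate: `τ_{i+1} = τᵢ/√(1+2γτᵢ)` implies `τ_N = O(1/N)` and hence
`φ_N := c₀/τ_N²` grows quadratically. -/
theorem step_length_decay (τ : ℕ → ℝ) (γ : ℝ) (hγ : 0 < γ)
    (hpos : ∀ i, 0 < τ i)
    (hrec : ∀ i, τ (i + 1) = τ i / Real.sqrt (1 + 2 * γ * τ i)) :
    ∃ c > 0, (∀ N : ℕ, 1 ≤ N → τ N ≤ c / N) ∧
      ∀ c₀ > 0, ∃ c' > 0, ∀ N : ℕ, 1 ≤ N → c' * (N : ℝ) ^ 2 ≤ c₀ / (τ N) ^ 2 := by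
  set u : ℕ → ℝ := fun i => (τ i)⁻¹
  have hu₀ : 0 < u 0 := inv_pos.mpr (hpos 0)
  set δ := min (γ / 2) (u 0)
  have hδ : 0 < δ := lt_min (by positivity) hu₀
  have hgrowth : ∀ N : ℕ, N * δ ≤ u N := fun N => by
    have := add_mul_le_of_add_le_succ hδ.le (u := u) (fun n hn => by
      simp only [u, hrec n, inv_div_sqrt_one_add_mul (hpos n).le]
      exact add_min_le_sqrt_sq_add hγ.le hu₀.le hn) N
    linarith
  refine ⟨δ⁻¹, inv_pos.mpr hδ, fun N hN => ?_, fun c₀ hc₀ => ⟨c₀ * δ ^ 2, by positivity, fun N _ => ?_⟩⟩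
  · have hN : (0 : ℝ) < N := by exact_mod_cast hN
    rw [inv_div_left, le_inv_comm₀ (hpos N) (by positivity)]
    exact hgrowth N
  · calc c₀ * δ ^ 2 * (N : ℝ) ^ 2 = c₀ * (N * δ) ^ 2 := by ring
      _ ≤ c₀ * (u N) ^ 2 := by gcongr; exact hgrowth N
      _ = c₀ / (τ N) ^ 2 := by simp only [u, inv_pow, div_eq_mul_inv]
end

section
/- For all real φ, φ′: ‖D‖² := 2r̂²(1 − cos(φ̂ − φ)) + r²(φ − φ̂)² − 2r·r̂·(φ̂ − φ)·sin(φ̂ − φ) ≤ (r̂ − r)²(φ̂ − φ)² + 2r·r̂·(φ̂ − φ)⁴ for all real r, r̂ ≥ 0 and angles φ, φ̂. -/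
/-! With `t = φh - φ`, the bounds `1 - cos t ≤ t² / 2` and `t sin t ≥ t² - t⁴ / 6 ≥ t² - t⁴`
make the left-hand side at most `(rh² + r²) t² - 2 r rh (t² - t⁴) = (rh - r)² t² + 2 r rh t⁴`,
using `r rh ≥ 0`. -/

open Real

lemma sq_sub_pow_four_div_six_le_mul_sin (t : ℝ) : t ^ 2 - t ^ 4 / 6 ≤ t * sin t := by
  -- both sides are even in `t`
  wlog ht : 0 ≤ t generalizing t
  · simpa [sin_neg, Even.neg_pow (by decide : Even 2), Even.neg_pow (by decide : Even 4)]
      using this (-t) (by linarith)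
  calc t ^ 2 - t ^ 4 / 6 = t * (t - t ^ 3 / 6) := by ring
    _ ≤ t * sin t := mul_le_mul_of_nonneg_left (sin_ge_sub_cube ht) ht

/-- Taylor-remainder bound from the complex phase-amplitude reconstruction appendix. -/
theorem complex_reconstruction_remainder_bound (r rh φ φh : ℝ) (hr : 0 ≤ r) (hrh : 0 ≤ rh) :
    2 * rh ^ 2 * (1 - Real.cos (φh - φ)) + r ^ 2 * (φ - φh) ^ 2
        - 2 * r * rh * (φh - φ) * Real.sin (φh - φ)
      ≤ (rh - r) ^ 2 * (φh - φ) ^ 2 + 2 * r * rh * (φh - φ) ^ 4 := by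
  set t := φh - φ
  have hφ : (φ - φh) ^ 2 = t ^ 2 := by ring
  have hcos : 1 - cos t ≤ t ^ 2 / 2 := by linarith [one_sub_sq_div_two_le_cos (x := t)]
  have hsin : t ^ 2 - t ^ 4 ≤ t * sin t := by
    have ht4 : 0 ≤ t ^ 4 := by positivity
    linarith [sq_sub_pow_four_div_six_le_mul_sin t]
  have hrrh : 0 ≤ r * rh := mul_nonneg hr hrh
  rw [hφ]
  calc _ = 2 * rh ^ 2 * (1 - cos t) + r ^ 2 * t ^ 2 - 2 * (r * rh) * (t * sin t) := by ring
    _ ≤ 2 * rh ^ 2 * (t ^ 2 / 2) + r ^ 2 * t ^ 2 - 2 * (r * rh) * (t ^ 2 - t ^ 4) := by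
      gcongr
    _ = (rh - r) ^ 2 * t ^ 2 + 2 * r * rh * t ^ 4 := by ring
end

section
/- Let α, β, γ_x, ξ, L > 0 with 0 < ξ ≤ γ_x, and let X, Y be real Hilbert spaces. Suppose K : X → Y is Fréchet differentiable with L-Lipschitz derivative on a convex neighborhood 𝒳 of x̂, ŷ ∈ Y, and ‖x − x̂‖²_{Γ} + ⟨(∇K(x) − ∇K(x̂))(x − x̂), ŷ⟩ ≥ γ_x‖x − x̂‖² for all x ∈ 𝒳, where Γ ∈ L(X;X) is self-adjoint positive semidefinite. Then for all x, x′ ∈ 𝒳: ⟨[∇K(x′) − ∇K(x̂)]*ŷ, x − x̂⟩ + ‖x − x̂‖²_Γ ≥ (2(γ_x − ξ)/L)·‖K(x̂) − K(x) − ∇K(x)(x̂ − x)‖ − (L²‖ŷ‖²/(4ξ))·‖x − x′‖². -/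
/-!
Split `⟪(K' x' - K' x̂) (x - x̂), ŷ⟫` at `K' x`. The part with `K' x - K' x̂` is controlled by the
growth condition, the cross term with `K' x' - K' x` by Cauchy–Schwarz and Young's inequality
with weight `ξ`. Since `K'` is `L`-Lipschitz along the segment from `x` to `x̂`, the Taylor
remainder of `K` at `x` is at most `L / 2 * ‖x - x̂‖ ^ 2`, so the leftover
`(γx - ξ) * ‖x - x̂‖ ^ 2` dominates `2 * (γx - ξ) / L` times the remainder.
-/

open scoped RealInnerProductSpace

open Set

theorem norm_sub_sub_deriv_le_of_norm_deriv_sub_le {E : Type*} [NormedAddCommGroup E]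
    [NormedSpace ℝ E] {g g' : ℝ → E} {C : ℝ}
    (hg : ∀ t ∈ Icc (0 : ℝ) 1, HasDerivAt g (g' t) t)
    (hC : ∀ t ∈ Ico (0 : ℝ) 1, ‖g' t - g' 0‖ ≤ C * t) :
    ‖g 1 - g 0 - g' 0‖ ≤ C / 2 := by
  have hremainder : ∀ t ∈ Icc (0 : ℝ) 1,
      HasDerivAt (fun t => g t - g 0 - t • g' 0) (g' t - g' 0) t := fun t ht => by
    have := ((hg t ht).sub_const (g 0)).sub ((hasDerivAt_id' t).smul_const (g' 0))
    rwa [one_smul] at this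
  have hbound : ∀ t, HasDerivAt (fun t => C / 2 * t ^ 2) (C * t) t := fun t =>
    ((hasDerivAt_pow 2 t).const_mul (C / 2)).congr_deriv (by push_cast; ring)
  have := image_norm_le_of_norm_deriv_right_le_deriv_boundary
    (fun t ht => (hremainder t ht).continuousAt.continuousWithinAt)
    (fun t ht => (hremainder t (Ico_subset_Icc_self ht)).hasDerivWithinAt)
    (by simp) hbound hC (right_mem_Icc.2 zero_le_one)
  simpa using this

theorem Convex.norm_image_sub_sub_fderiv_le {E F : Type*}
    [NormedAddCommGroup E] [NormedSpace ℝ E] [NormedAddCommGroup F] [NormedSpace ℝ F]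
    {f : E → F} {f' : E → E →L[ℝ] F} {s : Set E} {L : ℝ} (hs : Convex ℝ s)
    (hf : ∀ x ∈ s, HasFDerivAt f (f' x) x)
    (hlip : ∀ x ∈ s, ∀ y ∈ s, ‖f' x - f' y‖ ≤ L * ‖x - y‖)
    {a b : E} (ha : a ∈ s) (hb : b ∈ s) :
    ‖f b - f a - f' a (b - a)‖ ≤ L / 2 * ‖b - a‖ ^ 2 := by
  set v := b - a
  have hseg : ∀ t ∈ Icc (0 : ℝ) 1, a + t • v ∈ s := fun t ht =>
    hs.add_smul_sub_mem ha hb ht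
  have hderiv : ∀ t ∈ Icc (0 : ℝ) 1,
      HasDerivAt (fun t : ℝ => f (a + t • v)) (f' (a + t • v) v) t := fun t ht =>
    (hf _ (hseg t ht)).comp_hasDerivAt t
      (by simpa using ((hasDerivAt_id t).smul_const v).const_add a)
  have hderiv_lip : ∀ t ∈ Ico (0 : ℝ) 1,
      ‖f' (a + t • v) v - f' (a + (0 : ℝ) • v) v‖ ≤ L * ‖v‖ ^ 2 * t := fun t ht => by
    have hlip_t := hlip _ (hseg t (Ico_subset_Icc_self ht)) a ha
    rw [add_sub_cancel_left, norm_smul, Real.norm_of_nonneg ht.1] at hlip_t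
    calc ‖f' (a + t • v) v - f' (a + (0 : ℝ) • v) v‖
        = ‖(f' (a + t • v) - f' a) v‖ := by simp
      _ ≤ ‖f' (a + t • v) - f' a‖ * ‖v‖ := (f' (a + t • v) - f' a).le_opNorm v
      _ ≤ L * (t * ‖v‖) * ‖v‖ := by gcongr
      _ = L * ‖v‖ ^ 2 * t := by ring
  have := norm_sub_sub_deriv_le_of_norm_deriv_sub_le hderiv hderiv_lip
  simp only [one_smul, zero_smul, add_zero, add_sub_cancel, v] at this
  linarith

theorem neg_le_inner_apply_of_opNorm_le {X Y : Type*}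
    [NormedAddCommGroup X] [NormedSpace ℝ X] [NormedAddCommGroup Y] [InnerProductSpace ℝ Y]
    {A : X →L[ℝ] Y} {M ξ : ℝ} (hA : ‖A‖ ≤ M) (hξ : 0 < ξ) (d : X) (y : Y) :
    -(ξ * ‖d‖ ^ 2 + M ^ 2 * ‖y‖ ^ 2 / (4 * ξ)) ≤ ⟪A d, y⟫ := by
  have hcauchy : |⟪A d, y⟫| ≤ ‖d‖ * (M * ‖y‖) :=
    calc |⟪A d, y⟫| ≤ ‖A d‖ * ‖y‖ := abs_real_inner_le_norm _ _
      _ ≤ ‖A‖ * ‖d‖ * ‖y‖ := by gcongr; exact A.le_opNorm d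
      _ ≤ M * ‖d‖ * ‖y‖ := by gcongr
      _ = ‖d‖ * (M * ‖y‖) := by ring
  have hyoung := two_mul_le_add_mul_sq (a := ‖d‖) (b := M * ‖y‖) (mul_pos two_pos hξ)
  have hyoung' : ‖d‖ * (M * ‖y‖) ≤ ξ * ‖d‖ ^ 2 + M ^ 2 * ‖y‖ ^ 2 / (4 * ξ) := by
    field_simp at hyoung ⊢
    linarith
  linarith [neg_abs_le ⟪A d, y⟫]

theorem three_point_condition_from_growth_general {X Y : Type*}
    [NormedAddCommGroup X] [InnerProductSpace ℝ X]
    [NormedAddCommGroup Y] [InnerProductSpace ℝ Y]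
    (K : X → Y) (K' : X → X →L[ℝ] Y) (𝒳 : Set X) (hconv : Convex ℝ 𝒳)
    (xhat : X) (hxhat : xhat ∈ 𝒳) (yhat : Y) (Γ : X →L[ℝ] X)
    (L γx ξ : ℝ) (hL : 0 < L) (hξ0 : 0 < ξ) (hξγ : ξ ≤ γx)
    (hderiv : ∀ x ∈ 𝒳, HasFDerivAt K (K' x) x)
    (hlip : ∀ x ∈ 𝒳, ∀ x' ∈ 𝒳, ‖K' x - K' x'‖ ≤ L * ‖x - x'‖)
    (hgrowth : ∀ x ∈ 𝒳,
      ⟪Γ (x - xhat), x - xhat⟫ + ⟪(K' x - K' xhat) (x - xhat), yhat⟫ ≥ γx * ‖x - xhat‖ ^ 2) :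
    ∀ x ∈ 𝒳, ∀ x' ∈ 𝒳,
      ⟪(K' x' - K' xhat) (x - xhat), yhat⟫ + ⟪Γ (x - xhat), x - xhat⟫ ≥
        (2 * (γx - ξ) / L) * ‖K xhat - K x - K' x (xhat - x)‖
          - (L ^ 2 * ‖yhat‖ ^ 2 / (4 * ξ)) * ‖x - x'‖ ^ 2 := by
  intro x hx x' hx'
  have hsplit : (K' x' - K' xhat) (x - xhat) =
      (K' x' - K' x) (x - xhat) + (K' x - K' xhat) (x - xhat) := by
    rw [← add_apply, sub_add_sub_cancel]
  have hcross := neg_le_inner_apply_of_opNorm_le (hlip x' hx' x hx) hξ0 (x - xhat) yhat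
  have htaylor := hconv.norm_image_sub_sub_fderiv_le hderiv hlip hx hxhat
  rw [norm_sub_rev xhat x] at htaylor
  have hremainder : (2 * (γx - ξ) / L) * ‖K xhat - K x - K' x (xhat - x)‖ ≤
      (γx - ξ) * ‖x - xhat‖ ^ 2 :=
    calc (2 * (γx - ξ) / L) * ‖K xhat - K x - K' x (xhat - x)‖
        ≤ (2 * (γx - ξ) / L) * (L / 2 * ‖x - xhat‖ ^ 2) := by gcongr
      _ = (γx - ξ) * ‖x - xhat‖ ^ 2 := by field_simp
  rw [norm_sub_rev x' x] at hcross
  rw [hsplit, inner_add_left]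
  linear_combination hcross + hgrowth x hx + hremainder

/-- Proposition 3.5: the growth condition on `K` at `xhat` verifies the three-point
condition with exponent `p = 1`. -/
theorem three_point_condition_from_growth {X Y : Type*}
    [NormedAddCommGroup X] [InnerProductSpace ℝ X]
    [NormedAddCommGroup Y] [InnerProductSpace ℝ Y]
    (K : X → Y) (K' : X → X →L[ℝ] Y) (𝒳 : Set X) (hconv : Convex ℝ 𝒳)
    (xhat : X) (hxhat : xhat ∈ 𝒳) (yhat : Y) (Γ : X →L[ℝ] X)
    (L γx ξ : ℝ) (hL : 0 < L) (hγx : 0 < γx) (hξ0 : 0 < ξ) (hξγ : ξ ≤ γx)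
    (hΓsym : ∀ u v : X, ⟪Γ u, v⟫ = ⟪u, Γ v⟫)
    (hΓpos : ∀ u : X, 0 ≤ ⟪Γ u, u⟫)
    (hderiv : ∀ x ∈ 𝒳, HasFDerivAt K (K' x) x)
    (hlip : ∀ x ∈ 𝒳, ∀ x' ∈ 𝒳, ‖K' x - K' x'‖ ≤ L * ‖x - x'‖)
    (hgrowth : ∀ x ∈ 𝒳,
      ⟪Γ (x - xhat), x - xhat⟫ + ⟪(K' x - K' xhat) (x - xhat), yhat⟫ ≥ γx * ‖x - xhat‖ ^ 2) :
    ∀ x ∈ 𝒳, ∀ x' ∈ 𝒳,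
      ⟪(K' x' - K' xhat) (x - xhat), yhat⟫ + ⟪Γ (x - xhat), x - xhat⟫ ≥
        (2 * (γx - ξ) / L) * ‖K xhat - K x - K' x (xhat - x)‖
          - (L ^ 2 * ‖yhat‖ ^ 2 / (4 * ξ)) * ‖x - x'‖ ^ 2 :=
  three_point_condition_from_growth_general K K' 𝒳 hconv xhat hxhat yhat Γ L γx ξ hL hξ0 hξγ hderiv
    hlip hgrowth
end
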